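/- Let A, B be c×d real matrices, let x₀, u₁, …, u_d, ∈ ℝ^d, and suppose the unit vectors b_i = (u_i - x₀)/‖u_i - x₀‖ satisfy |⟨b_i,b_j⟩| ≤ α/d for i ≠ j with 0 < α < 1. If ‖(A - B)b_i‖ ≤ ε' for every i, then the operator norm ‖A - B‖ ≤ d(1-α)^{-1/2} ε'. -/

import Mathlib

noncomputable def matOpNorm {c d : ℕ} (A : Matrix (Fin c) (Fin d) ℝ) : ℝ :=
  ‖(Matrix.toEuclideanLin A).toContinuousLinearMap‖

/-!
If unit vectors `b i` have pairwise inner products at most `δ` in absolute value, then the Gram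
form satisfies `‖∑ c i • b i‖² ≥ (1 - n δ) ∑ c i²`, where `n` is the number of vectors. When
`n δ < 1` this makes the `b i` linearly independent, hence a basis once `n` is the dimension, and
bounds every coordinate of a vector `x` by `(1 - n δ)^(-1/2) ‖x‖`. Expanding `T x = ∑ c i • T (b i)`
and using the triangle inequality then gives `‖T‖ ≤ n (1 - n δ)^(-1/2) ε` whenever
`‖T (b i)‖ ≤ ε` for all `i`; with `δ = α / d` and `n = d` this is the claim.
-/

open Finset
open scoped InnerProductSpace

section NearlyOrthonormal

variable {ι E : Type*} [NormedAddCommGroup E] [InnerProductSpace ℝ E] {b : ι → E} {δ : ℝ}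

/-- Off the diagonal this is `|c i c j| ≤ (c i ^ 2 + c j ^ 2) / 2`. -/
theorem le_mul_mul_inner_of_nearly_orthonormal [DecidableEq ι] (hb : ∀ i, ‖b i‖ = 1)
    (hδ : 0 ≤ δ) (hbb : ∀ i j, i ≠ j → |⟪b i, b j⟫_ℝ| ≤ δ) (c : ι → ℝ) (i j : ι) :
    (if i = j then c i ^ 2 else 0) - δ * (c i ^ 2 + c j ^ 2) / 2 ≤
      c i * c j * ⟪b i, b j⟫_ℝ := by
  rcases eq_or_ne i j with rfl | hij
  · rw [if_pos rfl, real_inner_self_eq_norm_sq, hb]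
    nlinarith [sq_nonneg (c i)]
  · rw [if_neg hij]
    have hcc : |c i * c j| ≤ (c i ^ 2 + c j ^ 2) / 2 := by
      rw [abs_mul]
      nlinarith [sq_nonneg (|c i| - |c j|), sq_abs (c i), sq_abs (c j)]
    have := abs_le.mp (abs_mul (c i * c j) ⟪b i, b j⟫_ℝ ▸
      mul_le_mul hcc (hbb i j hij) (abs_nonneg _) (by positivity))
    linarith [this.1]

variable [Fintype ι]

theorem norm_sum_smul_sq_eq_sum_sum_inner (b : ι → E) (c : ι → ℝ) :
    ‖∑ i, c i • b i‖ ^ 2 = ∑ i, ∑ j, c i * c j * ⟪b i, b j⟫_ℝ := by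
  rw [← real_inner_self_eq_norm_sq, sum_inner]
  simp only [inner_sum, real_inner_smul_left, real_inner_smul_right]
  exact sum_congr rfl fun i _ => sum_congr rfl fun j _ => by ring

theorem sum_sq_mul_le_norm_sum_smul_sq (hb : ∀ i, ‖b i‖ = 1) (hδ : 0 ≤ δ)
    (hbb : ∀ i j, i ≠ j → |⟪b i, b j⟫_ℝ| ≤ δ) (c : ι → ℝ) :
    (1 - Fintype.card ι * δ) * ∑ i, c i ^ 2 ≤ ‖∑ i, c i • b i‖ ^ 2 := by
  classical
  rw [norm_sum_smul_sq_eq_sum_sum_inner]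
  refine le_trans (le_of_eq ?_) (sum_le_sum fun i _ => sum_le_sum fun j _ =>
    le_mul_mul_inner_of_nearly_orthonormal hb hδ hbb c i j)
  simp only [sum_sub_distrib, sum_ite_eq, mem_univ, if_true, ← sum_div, ← mul_sum,
    sum_add_distrib, sum_const, card_univ, nsmul_eq_mul]
  ring

theorem abs_le_rpow_mul_norm_sum_smul (hb : ∀ i, ‖b i‖ = 1) (hδ : 0 ≤ δ)
    (hbb : ∀ i j, i ≠ j → |⟪b i, b j⟫_ℝ| ≤ δ) (hδ1 : Fintype.card ι * δ < 1) (c : ι → ℝ)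
    (i : ι) : |c i| ≤ (1 - Fintype.card ι * δ) ^ (-(1 / 2 : ℝ)) * ‖∑ j, c j • b j‖ := by
  set γ := 1 - Fintype.card ι * δ
  have hγ : 0 < γ := sub_pos.mpr hδ1
  have hci : c i ^ 2 ≤ γ⁻¹ * ‖∑ j, c j • b j‖ ^ 2 := by
    rw [le_inv_mul_iff₀ hγ]
    exact (mul_le_mul_of_nonneg_left
      (single_le_sum (fun j _ => sq_nonneg (c j)) (mem_univ i)) hγ.le).trans
      (sum_sq_mul_le_norm_sum_smul_sq hb hδ hbb c)
  calc |c i| = √(c i ^ 2) := (Real.sqrt_sq_eq_abs _).symm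
    _ ≤ √(γ⁻¹ * ‖∑ j, c j • b j‖ ^ 2) := Real.sqrt_le_sqrt hci
    _ = γ ^ (-(1 / 2 : ℝ)) * ‖∑ j, c j • b j‖ := by
      rw [Real.sqrt_mul (by positivity), Real.sqrt_sq (norm_nonneg _), Real.sqrt_inv,
        Real.sqrt_eq_rpow, Real.rpow_neg hγ.le]

theorem linearIndependent_of_nearly_orthonormal (hb : ∀ i, ‖b i‖ = 1) (hδ : 0 ≤ δ)
    (hbb : ∀ i j, i ≠ j → |⟪b i, b j⟫_ℝ| ≤ δ) (hδ1 : Fintype.card ι * δ < 1) :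
    LinearIndependent ℝ b :=
  Fintype.linearIndependent_iff.mpr fun c hc i => abs_nonpos_iff.mp <| by
    simpa [hc] using abs_le_rpow_mul_norm_sum_smul hb hδ hbb hδ1 c i

variable {F : Type*} [NormedAddCommGroup F] [NormedSpace ℝ F] [FiniteDimensional ℝ E]

theorem opNorm_le_of_nearly_orthonormal (hb : ∀ i, ‖b i‖ = 1) (hδ : 0 ≤ δ)
    (hbb : ∀ i j, i ≠ j → |⟪b i, b j⟫_ℝ| ≤ δ) (hδ1 : Fintype.card ι * δ < 1)
    (hcard : Fintype.card ι = Module.finrank ℝ E) (T : E →L[ℝ] F) {ε : ℝ}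
    (hT : ∀ i, ‖T (b i)‖ ≤ ε) :
    ‖T‖ ≤ Fintype.card ι * (1 - Fintype.card ι * δ) ^ (-(1 / 2 : ℝ)) * ε := by
  set K := (1 - Fintype.card ι * δ) ^ (-(1 / 2 : ℝ))
  have hspan := LinearIndependent.span_eq_top_of_card_eq_finrank'
    (linearIndependent_of_nearly_orthonormal hb hδ hbb hδ1) hcard
  refine T.opNorm_le_bound ?_ fun x => ?_
  · rcases isEmpty_or_nonempty ι with hι | ⟨⟨i⟩⟩
    · simp
    · exact mul_nonneg (by positivity) ((norm_nonneg _).trans (hT i))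
  obtain ⟨c, rfl⟩ :=
    (Submodule.mem_span_range_iff_exists_fun ℝ).mp (hspan ▸ Submodule.mem_top (x := x))
  calc ‖T (∑ i, c i • b i)‖ = ‖∑ i, c i • T (b i)‖ := by simp only [map_sum, map_smul]
    _ ≤ ∑ i, |c i| * ‖T (b i)‖ :=
      (norm_sum_le _ _).trans_eq (by simp only [norm_smul, Real.norm_eq_abs])
    _ ≤ ∑ i, K * ‖∑ j, c j • b j‖ * ε := sum_le_sum fun i _ => mul_le_mul
        (abs_le_rpow_mul_norm_sum_smul hb hδ hbb hδ1 c i) (hT i) (norm_nonneg _)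
        (by positivity)
    _ = _ := by rw [sum_const, card_univ, nsmul_eq_mul]; ring

end NearlyOrthonormal

theorem opNorm_diff_le_of_action_on_nearly_orthogonal_directions
    {c d : ℕ} (α ε' : ℝ) (hα0 : 0 < α) (hα1 : α < 1)
    (A B : Matrix (Fin c) (Fin d) ℝ)
    (x₀ : EuclideanSpace ℝ (Fin d)) (u : Fin d → EuclideanSpace ℝ (Fin d))
    (hu : ∀ i, u i ≠ x₀)
    (hinner : ∀ i j : Fin d, i ≠ j →
      |(inner ℝ ((‖u i - x₀‖⁻¹ : ℝ) • (u i - x₀)) ((‖u j - x₀‖⁻¹ : ℝ) • (u j - x₀)) : ℝ)|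
        ≤ α / d)
    (hact : ∀ i, ‖Matrix.toEuclideanLin (A - B) ((‖u i - x₀‖⁻¹ : ℝ) • (u i - x₀))‖ ≤ ε') :
    matOpNorm (A - B) ≤ d * (1 - α) ^ (-(1/2 : ℝ)) * ε' := by
  have hb : ∀ i, ‖(‖u i - x₀‖⁻¹ : ℝ) • (u i - x₀)‖ = 1 := fun i =>
    norm_smul_inv_norm (sub_ne_zero.mpr (hu i))
  obtain rfl | hd := eq_or_ne d 0
  · simp [matOpNorm]
  have hcard : Fintype.card (Fin d) * (α / d) = α := by
    rw [Fintype.card_fin, mul_div_cancel₀ _ (Nat.cast_ne_zero.mpr hd)]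
  have hbound := opNorm_le_of_nearly_orthonormal (δ := α / d) hb (by positivity) hinner
    (by rwa [hcard]) (by simp) (Matrix.toEuclideanLin (A - B)).toContinuousLinearMap hact
  rwa [hcard, Fintype.card_fin] at hbound
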